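/- (Regret-type bound.) Under the exponential weights scheme with α_0^(k) = 1/K for all k, β ∈ (0,1), ρ_n^(k) ∈ [0,1], π_n^(k) = α_n^(k)/Σ_j α_n^(j), and update α_{n+1}^(k) = α_n^(k)·β^{ρ_n^(k)}, the total mixture loss L = Σ_{n=0}^{N-1} Σ_k π_n^(k) ρ_n^(k) satisfies L ≤ (log K + log(1/β)·min_{j} Σ_{n=0}^{N-1} ρ_n^(j)) / (1 - β). -/
import Mathlib


theorem stmt_6 (K N : ℕ) (hK : 1 ≤ K) (β : ℝ) (hβ : β ∈ Set.Ioo (0:ℝ) 1)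
    (α ρ π : ℕ → Fin K → ℝ)
    (hα0 : ∀ k, α 0 k = 1 / K)
    (hρ : ∀ n k, ρ n k ∈ Set.Icc (0:ℝ) 1)
    (hupd : ∀ n k, α (n+1) k = α n k * β ^ (ρ n k))
    (hπ : ∀ n k, π n k = α n k / ∑ j, α n j) :
    (∑ n ∈ Finset.range N, ∑ k, π n k * ρ n k)
      ≤ (Real.log K + Real.log (1/β) *
          (Finset.univ.inf' (Finset.univ_nonempty_iff.mpr ⟨⟨0, hK⟩⟩)
            fun j => ∑ n ∈ Finset.range N, ρ n j)) / (1 - β) := by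
  obtain ⟨hβ0, hβ1⟩ := hβ
  haveI : Nonempty (Fin K) := ⟨⟨0, hK⟩⟩
  have hKpos : (0:ℝ) < K := by exact_mod_cast hK
  -- positivity of weights
  have hαpos : ∀ n k, 0 < α n k := by
    intro n k
    induction n with
    | zero => rw [hα0]; positivity
    | succ n ih =>
      rw [hupd]
      exact mul_pos ih (Real.rpow_pos_of_pos hβ0 _)
  set S : ℕ → ℝ := fun n => ∑ k, α n k with hS
  have hSpos : ∀ n, 0 < S n := fun n =>
    Finset.sum_pos (fun k _ => hαpos n k) Finset.univ_nonempty
  have hS0 : S 0 = 1 := by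
    simp only [hS, hα0, Finset.sum_const, Finset.card_univ, Fintype.card_fin, nsmul_eq_mul]
    field_simp
  -- closed form
  have hαeq : ∀ n k, α n k = (1/K) * β ^ (∑ m ∈ Finset.range n, ρ m k) := by
    intro n k
    induction n with
    | zero => simp [hα0]
    | succ n ih =>
      rw [hupd, ih, Finset.sum_range_succ, Real.rpow_add hβ0]
      ring
  -- key convexity inequality
  have key : ∀ x : ℝ, 0 ≤ x → x ≤ 1 → β ^ x ≤ 1 - (1-β)*x := by
    intro x hx0 hx1
    have h := convexOn_exp.2 (Set.mem_univ 0) (Set.mem_univ (Real.log β))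
      (by linarith : (0:ℝ) ≤ 1 - x) hx0 (by ring)
    simp only [smul_eq_mul, mul_zero, zero_add, Real.exp_zero, Real.exp_log hβ0] at h
    rw [Real.rpow_def_of_pos hβ0]
    calc Real.exp (Real.log β * x) = Real.exp (x * Real.log β) := by rw [mul_comm]
      _ ≤ (1-x) * 1 + x * β := h
      _ = 1 - (1-β)*x := by ring
  set ℓ : ℕ → ℝ := fun n => ∑ k, π n k * ρ n k with hℓ
  have hsum : ∀ n, ∑ k, α n k * ρ n k = S n * ℓ n := by
    intro n
    have h : ℓ n = (∑ k, α n k * ρ n k) / S n := by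
      rw [hℓ, Finset.sum_div]
      refine Finset.sum_congr rfl fun k _ => ?_
      rw [hπ n k]
      simp only [hS]
      ring
    rw [h, mul_div_cancel₀ _ (hSpos n).ne']
  -- one-step bound
  have step : ∀ n, S (n+1) ≤ S n * (1 - (1-β) * ℓ n) := by
    intro n
    have : S (n+1) ≤ ∑ k, α n k * (1 - (1-β) * ρ n k) := by
      refine Finset.sum_le_sum fun k _ => ?_
      rw [hupd]
      exact mul_le_mul_of_nonneg_left (key _ (hρ n k).1 (hρ n k).2) (hαpos n k).le
    calc S (n+1) ≤ ∑ k, α n k * (1 - (1-β) * ρ n k) := this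
      _ = S n - (1-β) * ∑ k, α n k * ρ n k := by
          simp only [hS, Finset.mul_sum, ← Finset.sum_sub_distrib]
          exact Finset.sum_congr rfl fun k _ => by ring
      _ = S n * (1 - (1-β) * ℓ n) := by rw [hsum]; ring
  -- log step
  have logstep : ∀ n, Real.log (S (n+1)) ≤ Real.log (S n) - (1-β) * ℓ n := by
    intro n
    have hc : 0 < 1 - (1-β) * ℓ n := by
      have := step n
      nlinarith [hSpos n, hSpos (n+1)]
    calc Real.log (S (n+1)) ≤ Real.log (S n * (1 - (1-β) * ℓ n)) :=
          Real.log_le_log (hSpos (n+1)) (step n)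
      _ = Real.log (S n) + Real.log (1 - (1-β) * ℓ n) :=
          Real.log_mul (hSpos n).ne' hc.ne'
      _ ≤ Real.log (S n) + ((1 - (1-β) * ℓ n) - 1) := by
          linarith [Real.log_le_sub_one_of_pos hc]
      _ = Real.log (S n) - (1-β) * ℓ n := by ring
  -- telescoping
  have tele : ∀ n, Real.log (S n) ≤ - (1-β) * ∑ m ∈ Finset.range n, ℓ m := by
    intro n
    induction n with
    | zero => simp [hS0]
    | succ n ih =>
      rw [Finset.sum_range_succ]
      have := logstep n
      linarith
  -- lower bound via best agent
  obtain ⟨j, _, hj⟩ := Finset.exists_mem_eq_inf' (Finset.univ_nonempty_iff.mpr ⟨⟨0, hK⟩⟩)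
    (fun j => ∑ n ∈ Finset.range N, ρ n j)
  have hlow : Real.log (S N) ≥ - Real.log K + (∑ n ∈ Finset.range N, ρ n j) * Real.log β := by
    have h1 : α N j ≤ S N :=
      Finset.single_le_sum (fun k _ => (hαpos N k).le) (Finset.mem_univ j)
    have h2 : Real.log (α N j) ≤ Real.log (S N) := Real.log_le_log (hαpos N j) h1
    rw [hαeq N j, Real.log_mul (by positivity) (Real.rpow_pos_of_pos hβ0 _).ne',
      Real.log_rpow hβ0, one_div, Real.log_inv] at h2
    linarith
  have hLB : (1-β) * ∑ m ∈ Finset.range N, ℓ m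
      ≤ Real.log K + Real.log (1/β) * (∑ n ∈ Finset.range N, ρ n j) := by
    have := tele N
    rw [one_div, Real.log_inv]
    nlinarith
  have h1β : (0:ℝ) < 1 - β := by linarith
  rw [hj, le_div_iff₀ h1β]
  calc (∑ n ∈ Finset.range N, ∑ k, π n k * ρ n k) * (1-β)
      = (1-β) * ∑ m ∈ Finset.range N, ℓ m := by rw [hℓ]; ring
    _ ≤ _ := hLB
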